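/- arXiv:2512.00955 — 2 statements merged into one kernel-verified Lean document; each statement's English description precedes it below -/
import Mathlib

section
/- For a random variable X supported on [a,b] with variance equal to ((b-a)/2)², the distribution of X places mass 1/2 at a and mass 1/2 at b. -/
open MeasureTheory ProbabilityTheory

/-!
By the Bhatia–Davis identity, `Var X = (b - 𝔼X)(𝔼X - a) - 𝔼[(b - X)(X - a)]`, and
`(b - 𝔼X)(𝔼X - a) = ((b - a)/2)² - (𝔼X - (a + b)/2)²`. Since `(b - X)(X - a) ≥ 0` on `[a, b]`,
the variance `((b - a)/2)²` forces `𝔼X = (a + b)/2` and `(b - X)(X - a) = 0` almost surely.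
So `X` takes only the values `a` and `b`, and its mean `(a + b)/2` makes both equally likely.
-/

section

variable {Ω : Type*} {mΩ : MeasurableSpace Ω} {μ : Measure Ω} {X : Ω → ℝ}

lemma variance_eq_sub_mul_sub_sub_integral [IsProbabilityMeasure μ] (hX : MemLp X 2 μ) (a b : ℝ) :
    variance X μ = (b - μ[X]) * (μ[X] - a) - ∫ ω, (b - X ω) * (X ω - a) ∂μ := by
  have hX₁ : Integrable X μ := hX.integrable one_le_two
  have hX₂ : Integrable (fun ω ↦ X ω ^ 2) μ := hX.integrable_sq
  have hexpand : (fun ω ↦ (b - X ω) * (X ω - a)) = fun ω ↦ (a + b) * X ω - X ω ^ 2 - a * b := by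
    ext ω; ring
  have hquad : Integrable (fun ω ↦ (a + b) * X ω - X ω ^ 2) μ := (hX₁.const_mul _).sub hX₂
  rw [variance_eq_sub hX, hexpand, integral_sub hquad (integrable_const _),
    integral_sub (hX₁.const_mul _) hX₂, integral_const_mul]
  simp only [integral_const, probReal_univ, smul_eq_mul, one_mul, Pi.pow_apply]
  ring

lemma ae_eq_or_eq_of_variance_eq_sub_mul_sub [IsProbabilityMeasure μ] {a b : ℝ}
    (h : ∀ᵐ ω ∂μ, X ω ∈ Set.Icc a b) (hX : AEMeasurable X μ)
    (hvar : variance X μ = (b - μ[X]) * (μ[X] - a)) :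
    ∀ᵐ ω ∂μ, X ω = a ∨ X ω = b := by
  have hX₂ : MemLp X 2 μ := memLp_of_bounded h hX.aestronglyMeasurable 2
  have hgap : ∫ ω, (b - X ω) * (X ω - a) ∂μ = 0 := by
    linarith [variance_eq_sub_mul_sub_sub_integral hX₂ a b]
  have hnonneg : 0 ≤ᵐ[μ] fun ω ↦ (b - X ω) * (X ω - a) := by
    filter_upwards [h] with ω hω
    exact mul_nonneg (sub_nonneg.2 hω.2) (sub_nonneg.2 hω.1)
  have hint : Integrable (fun ω ↦ (b - X ω) * (X ω - a)) μ :=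
    ((memLp_const b).sub hX₂).integrable_mul (hX₂.sub (memLp_const a))
  filter_upwards [(integral_eq_zero_iff_of_nonneg_ae hnonneg hint).1 hgap] with ω hω
  rcases mul_eq_zero.1 hω with hb | ha
  · exact Or.inr (sub_eq_zero.1 hb).symm
  · exact Or.inl (sub_eq_zero.1 ha)

lemma integral_eq_add_mul_measureReal_of_ae_eq_or_eq [IsProbabilityMeasure μ] {a b : ℝ}
    (hX : Measurable X) (h : ∀ᵐ ω ∂μ, X ω = a ∨ X ω = b) :
    μ[X] = a + (b - a) * μ.real {ω | X ω = b} := by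
  have hB : MeasurableSet {ω | X ω = b} := hX (measurableSet_singleton b)
  have hX_eq : X =ᵐ[μ] fun ω ↦ a + (b - a) * {ω | X ω = b}.indicator 1 ω := by
    filter_upwards [h] with ω hω
    by_cases hωb : X ω = b
    · simp [hωb]
    · simp [Set.indicator_of_notMem (show ω ∉ {ω | X ω = b} from hωb), hω.resolve_right hωb]
  rw [integral_congr_ae hX_eq, integral_add (integrable_const _)
    ((integrable_indicator_iff hB).2 (integrable_const _).integrableOn |>.const_mul _),
    integral_const_mul, integral_indicator_one hB]
  simp

end

theorem stmt1_general {Ω : Type*} [MeasureSpace Ω] [IsProbabilityMeasure (ℙ : Measure Ω)]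
    (X : Ω → ℝ) (a b : ℝ) (hab : a < b)
    (hmeas : Measurable X)
    (hbdd : ∀ᵐ ω, X ω ∈ Set.Icc a b)
    (hvar : variance X ℙ = ((b - a) / 2) ^ 2) :
    ℙ {ω | X ω = a} = 1 / 2 ∧ ℙ {ω | X ω = b} = 1 / 2 := by
  have hmean : ℙ[X] = (a + b) / 2 := by
    have := variance_le_sub_mul_sub hbdd hmeas.aemeasurable
    nlinarith [sq_nonneg (ℙ[X] - (a + b) / 2)]
  have htwo : ∀ᵐ ω, X ω = a ∨ X ω = b :=
    ae_eq_or_eq_of_variance_eq_sub_mul_sub hbdd hmeas.aemeasurable (by rw [hvar, hmean]; ring)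
  have hmean_b := integral_eq_add_mul_measureReal_of_ae_eq_or_eq hmeas htwo
  have hmean_a :=
    integral_eq_add_mul_measureReal_of_ae_eq_or_eq hmeas (htwo.mono fun _ ↦ Or.symm)
  have hba : b - a ≠ 0 := sub_ne_zero.2 hab.ne'
  have half_of_real : ∀ s : Set Ω, (ℙ : Measure Ω).real s = 1 / 2 → ℙ s = 1 / 2 := fun s hs ↦ by
    rw [← ofReal_measureReal, hs, ENNReal.ofReal_div_of_pos two_pos]; simp
  refine ⟨half_of_real _ ?_, half_of_real _ ?_⟩
  · field_simp at hmean_a ⊢; nlinarith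
  · field_simp at hmean_b ⊢; nlinarith

/-- If a random variable `X` takes values in `[a,b]` a.s. (with `a < b`) and has
variance `((b-a)/2)^2`, then its distribution places mass `1/2` at `a` and `1/2` at `b`. -/
theorem stmt1 {Ω : Type*} [MeasureSpace Ω] [IsProbabilityMeasure (ℙ : Measure Ω)]
    (X : Ω → ℝ) (a b : ℝ) (hab : a < b)
    (hmeas : Measurable X) (hX : MemLp X 2 ℙ)
    (hbdd : ∀ᵐ ω, X ω ∈ Set.Icc a b)
    (hvar : variance X ℙ = ((b - a) / 2) ^ 2) :
    ℙ {ω | X ω = a} = 1 / 2 ∧ ℙ {ω | X ω = b} = 1 / 2 :=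
  stmt1_general X a b hab hmeas hbdd hvar
end

section
/- Latent-factor monotonicity (strict, via eigenspace overlap): Let Γ ∈ ℝ^{p×p} be symmetric PSD and β ∈ ℝ^p. If β has nonzero projection onto the eigenspace of Γ for its largest eigenvalue, then the map a ↦ ‖aββᵀ + Γ‖₂ is strictly increasing on (0, ∞). -/
open Matrix MeasureTheory ProbabilityTheory BigOperators Filter

/-- The spectral norm (operator 2-norm) of a real matrix. -/
noncomputable def spec {p : ℕ} (A : Matrix (Fin p) (Fin p) ℝ) : ℝ :=
  ‖LinearMap.toContinuousLinearMap (Matrix.toEuclideanLin A)‖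

/-- The Frobenius norm of a real matrix. -/
noncomputable def frob {p : ℕ} (A : Matrix (Fin p) (Fin p) ℝ) : ℝ :=
  Real.sqrt (∑ i, ∑ j, (A i j) ^ 2)

/-!
The spectral norm of a positive operator is attained by its quadratic form on the unit sphere.
For `0 < a < b`, let `x` be a unit vector with `⟪(a S + Γ) x, x⟫ = ‖a S + Γ‖`, where `S = ββᵀ`.
If `⟪S x, x⟫ > 0`, then `‖b S + Γ‖ ≥ ⟪(b S + Γ) x, x⟫ > ⟪(a S + Γ) x, x⟫`. Otherwise
`‖a S + Γ‖ = ⟪Γ x, x⟫ ≤ ‖Γ‖`, and a top eigenvector `v` of `Γ` with `⟪S v, v⟫ = (β ⬝ᵥ v)² > 0`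
gives `‖b S + Γ‖ ‖v‖² ≥ b ⟪S v, v⟫ + ‖Γ‖ ‖v‖² > ‖Γ‖ ‖v‖²`.
-/

open Metric

namespace ContinuousLinearMap

variable {E : Type*} [NormedAddCommGroup E] [InnerProductSpace ℝ E]

theorem reApplyInnerSelf_le_norm_mul_sq (T : E →L[ℝ] E) (x : E) :
    T.reApplyInnerSelf x ≤ ‖T‖ * ‖x‖ ^ 2 := by
  rcases eq_or_ne x 0 with rfl | hx
  · simp [reApplyInnerSelf_apply]
  have h := (le_abs_self _).trans (T.rayleighQuotient_le_norm x)
  rwa [rayleighQuotient, div_le_iff₀ (by positivity)] at h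

theorem reApplyInnerSelf_smul_add (a : ℝ) (S T : E →L[ℝ] E) (x : E) :
    (a • S + T).reApplyInnerSelf x = a * S.reApplyInnerSelf x + T.reApplyInnerSelf x := by
  simp [reApplyInnerSelf_apply, inner_add_left, inner_smul_left]

theorem IsPositive.exists_reApplyInnerSelf_eq_norm [FiniteDimensional ℝ E] [Nontrivial E]
    {T : E →L[ℝ] E} (hT : T.IsPositive) : ∃ x, ‖x‖ = 1 ∧ T.reApplyInnerSelf x = ‖T‖ := by
  obtain ⟨x₀, hx₀, hmax⟩ := (isCompact_sphere (0 : E) 1).exists_isMaxOn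
    (NormedSpace.sphere_nonempty.mpr zero_le_one) T.reApplyInnerSelf_continuous.continuousOn
  have hx₀ : ‖x₀‖ = 1 := by simpa using hx₀
  refine ⟨x₀, hx₀, le_antisymm (by simpa [hx₀] using T.reApplyInnerSelf_le_norm_mul_sq x₀) ?_⟩
  rw [T.norm_eq_iSup_rayleighQuotient hT.isSymmetric]
  refine ciSup_le fun x ↦ ?_
  have hx_nonneg : 0 ≤ T.rayleighQuotient x :=
    div_nonneg (hT.re_inner_nonneg_left x) (by positivity)
  rw [abs_of_nonneg hx_nonneg]
  rcases eq_or_ne x 0 with rfl | hx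
  · exact T.rayleighQuotient_apply_zero.trans_le (hT.re_inner_nonneg_left x₀)
  obtain ⟨y, hy, hyx⟩ : T.rayleighQuotient x ∈ T.rayleighQuotient '' sphere 0 1 := by
    rw [← T.image_rayleigh_eq_image_rayleigh_sphere one_pos]
    exact ⟨x, hx, rfl⟩
  rw [← hyx, rayleighQuotient, mem_sphere_zero_iff_norm.mp hy, one_pow, div_one]
  exact hmax hy

theorem strictMonoOn_norm_smul_add [FiniteDimensional ℝ E] {S T : E →L[ℝ] E}
    (hS : S.IsPositive) (hT : T.IsPositive) {v : E} (hv : T v = ‖T‖ • v)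
    (hSv : 0 < S.reApplyInnerSelf v) :
    StrictMonoOn (fun a : ℝ ↦ ‖a • S + T‖) (Set.Ioi 0) := by
  intro a ha b hb hab
  have : Nontrivial E := ⟨⟨v, 0, by rintro rfl; simp [reApplyInnerSelf_apply] at hSv⟩⟩
  obtain ⟨x, hx, hxa⟩ :=
    ((hS.smul_of_nonneg (Set.mem_Ioi.mp ha).le).add hT).exists_reApplyInnerSelf_eq_norm
  have hb_le := (b • S + T).reApplyInnerSelf_le_norm_mul_sq
  simp only [reApplyInnerSelf_smul_add] at hxa hb_le
  change ‖a • S + T‖ < ‖b • S + T‖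
  rw [← hxa]
  have hSx_nonneg : 0 ≤ S.reApplyInnerSelf x := hS.re_inner_nonneg_left x
  rcases hSx_nonneg.eq_or_lt with hSx_zero | hSx_pos
  · have hTv : T.reApplyInnerSelf v = ‖T‖ * ‖v‖ ^ 2 := by
      rw [reApplyInnerSelf_apply, hv, real_inner_smul_left, real_inner_self_eq_norm_sq]
      rfl
    have hbv := hb_le v
    rw [hTv] at hbv
    calc a * S.reApplyInnerSelf x + T.reApplyInnerSelf x = T.reApplyInnerSelf x := by
          rw [← hSx_zero, mul_zero, zero_add]
      _ ≤ ‖T‖ := by simpa [hx] using T.reApplyInnerSelf_le_norm_mul_sq x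
      _ < ‖b • S + T‖ :=
          lt_of_mul_lt_mul_right (by nlinarith [Set.mem_Ioi.mp hb]) (sq_nonneg ‖v‖)
  · calc a * S.reApplyInnerSelf x + T.reApplyInnerSelf x
          < b * S.reApplyInnerSelf x + T.reApplyInnerSelf x := by gcongr
      _ ≤ ‖b • S + T‖ := by simpa [hx] using hb_le x

end ContinuousLinearMap

namespace Matrix

theorem posSemidef_vecMulVec_self {n : Type*} [Finite n] (β : n → ℝ) :
    (vecMulVec β β).PosSemidef :=
  posSemidef_vecMulVec_self_star β

variable {n : Type*} [Fintype n] [DecidableEq n]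

theorem PosSemidef.isPositive_toEuclideanCLM {A : Matrix n n ℝ} (hA : A.PosSemidef) :
    (toEuclideanCLM (𝕜 := ℝ) A).IsPositive :=
  isPositive_toEuclideanLin_iff.mpr hA

theorem reApplyInnerSelf_toEuclideanCLM_vecMulVec (β v : n → ℝ) :
    (toEuclideanCLM (𝕜 := ℝ) (vecMulVec β β)).reApplyInnerSelf (WithLp.toLp 2 v) =
      (β ⬝ᵥ v) ^ 2 := by
  rw [ContinuousLinearMap.reApplyInnerSelf_apply, RCLike.re_to_real, real_inner_comm,
    inner_toEuclideanCLM]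
  simp [vecMulVec_mulVec, dotProduct_comm, sq]

end Matrix

theorem spec_eq_norm_toEuclideanCLM {p : ℕ} (A : Matrix (Fin p) (Fin p) ℝ) :
    spec A = ‖toEuclideanCLM (𝕜 := ℝ) A‖ :=
  rfl

/-- Latent-factor monotonicity (strict, via eigenspace overlap): if `β` has nonzero
projection onto the top eigenspace of a symmetric PSD matrix `Γ`, then
`a ↦ ‖a ββᵀ + Γ‖₂` is strictly increasing on `(0, ∞)`. -/
theorem stmt13 {p : ℕ} (Γ : Matrix (Fin p) (Fin p) ℝ) (hΓ : Γ.PosSemidef)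
    (β : Fin p → ℝ)
    (hproj : ∃ v : Fin p → ℝ, Γ.mulVec v = spec Γ • v ∧ dotProduct β v ≠ 0) :
    StrictMonoOn (fun a : ℝ => spec (a • Matrix.vecMulVec β β + Γ)) (Set.Ioi 0) := by
  obtain ⟨v, hv, hβv⟩ := hproj
  have heigen : toEuclideanCLM (𝕜 := ℝ) Γ (WithLp.toLp 2 v) =
      ‖toEuclideanCLM (𝕜 := ℝ) Γ‖ • WithLp.toLp 2 v := by
    rw [toEuclideanCLM_toLp, hv, spec_eq_norm_toEuclideanCLM, WithLp.toLp_smul]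
  have hoverlap : 0 < (toEuclideanCLM (𝕜 := ℝ) (vecMulVec β β)).reApplyInnerSelf
      (WithLp.toLp 2 v) := by
    rw [reApplyInnerSelf_toEuclideanCLM_vecMulVec]
    positivity
  simpa only [spec_eq_norm_toEuclideanCLM, map_add, map_smul] using
    ContinuousLinearMap.strictMonoOn_norm_smul_add
      (posSemidef_vecMulVec_self β).isPositive_toEuclideanCLM hΓ.isPositive_toEuclideanCLM
      heigen hoverlap
end
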